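/- For n ≥ 2 and 0 < τ ≤ 1/4 define A_n(τ) := [ (−1)^{n+1}·π/(4·q₂(τ)^{n+1}) − (1/(2n))(1/2 + 2πi/τ^2)·i^n/(1 − i·q₂(τ))^n ]·4/( π·(2i/τ)^{n+1} ), which equals 4·φ⁽ⁿ⁾(q₂(τ),τ)/(π·2^{n+1}·(i/τ)^{n+1}·n!) where φ⁽ⁿ⁾ is the n-th derivative of φ(·,τ). Then for every ε > 0 there exists τ₀ ∈ (0,1/4] such that for all τ ∈ (0,τ₀) and all integers n ≥ 2 one has |A_n(τ)| ≤ (1+ε)^n. -/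

import Mathlib

open Real Complex

noncomputable def Ppoly (τ : ℝ) (z : ℂ) : ℂ :=
  z ^ 3 + (Complex.I - 1 / (4 * (π : ℂ)) - Complex.I / (τ : ℂ) ^ 2) * z ^ 2
    - z / 4 - Complex.I / 4

/-- The normalized Taylor coefficients `A_n(τ)` of `φ` at the saddle `q₂`. -/
noncomputable def A2coef (q₂ : ℝ → ℂ) (n : ℕ) (τ : ℝ) : ℂ :=
  ((-1 : ℂ) ^ (n + 1) * (π : ℂ) / (4 * q₂ τ ^ (n + 1)) -
      (1 / (2 * (n : ℂ))) * (1 / 2 + 2 * (π : ℂ) * Complex.I / (τ : ℂ) ^ 2) *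
        Complex.I ^ n / (1 - Complex.I * q₂ τ) ^ n) * 4 /
    ((π : ℂ) * (2 * Complex.I / (τ : ℂ)) ^ (n + 1))

/-!
The root `q₂(τ)` lies within `O(τ²)` of `iτ/2`: the equation `P(q) = 0` reads
`4π (q - iτ/2)(q + iτ/2) = -iτ² q (4πq² + (4πi - 1)q - π)`, and `|q + iτ/2| ≈ τ`, so
`|q - iτ/2| ≤ τ²/3`. In `A_n(τ)` the pole part `-π/(4z)` of `φ` contributes `(iτ/(2q₂))^(n+1)`, of
modulus at most `(1 + 2τ)^(n+1)`, while the logarithmic part contributes `O(τ)` uniformly in `n ≥ 2`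
since `|τ / (2(1 - iq₂))| < 1`. Hence `|A_n(τ)| ≤ (1 + 2τ)^(n+1) + τ ≤ (1 + 26τ)^n`.
-/

lemma mul_sub_mul_add_eq_of_Ppoly_eq_zero {τ : ℝ} (hτ : τ ≠ 0) {q : ℂ} (h : Ppoly τ q = 0) :
    4 * π * ((q - I * τ / 2) * (q + I * τ / 2)) =
      -I * τ ^ 2 * q * (4 * π * q ^ 2 + (4 * π * I - 1) * q - π) := by
  have hτ' : (τ : ℂ) ≠ 0 := ofReal_ne_zero.2 hτ
  unfold Ppoly at h
  field_simp at h
  linear_combination I * h + 4 * π * q ^ 2 * I_sq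

lemma norm_quadratic_le {q : ℂ} (hq : ‖q‖ ≤ 3 / 20) :
    ‖4 * π * q ^ 2 + (4 * π * I - 1) * q - π‖ ≤ 2 * π := by
  have h4π : ‖(4 * π : ℂ)‖ = 4 * π := by
    rw [show (4 * π : ℂ) = ((4 * π : ℝ) : ℂ) by push_cast; ring, norm_real,
      norm_of_nonneg (by positivity)]
  have hc : ‖(4 * π * I - 1 : ℂ)‖ ≤ 4 * π + 1 := by
    simpa [norm_mul, h4π, abs_of_pos pi_pos] using norm_sub_le (4 * π * I : ℂ) 1
  calc ‖4 * π * q ^ 2 + (4 * π * I - 1) * q - π‖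
      ≤ 4 * π * ‖q‖ ^ 2 + (4 * π + 1) * ‖q‖ + π := by
        refine (norm_sub_le _ _).trans (add_le_add ((norm_add_le _ _).trans (add_le_add ?_ ?_)) ?_)
        · rw [norm_mul, h4π, norm_pow]
        · rw [norm_mul]; gcongr
        · rw [norm_real, norm_of_nonneg pi_pos.le]
    _ ≤ 4 * π * (3 / 20) ^ 2 + (4 * π + 1) * (3 / 20) + π := by gcongr
    _ ≤ 2 * π := by nlinarith [pi_gt_three]

lemma norm_I_mul_div_two {τ : ℝ} (hτ : 0 ≤ τ) : ‖I * τ / 2‖ = τ / 2 := by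
  simp [abs_of_nonneg hτ]

lemma abs_norm_sub_half_le {τ r : ℝ} (hτ : 0 ≤ τ) {q : ℂ} (h : ‖q - I * τ / 2‖ ≤ r) :
    |‖q‖ - τ / 2| ≤ r := by
  simpa [abs_of_nonneg hτ] using (abs_norm_sub_norm_le q (I * τ / 2)).trans h

lemma norm_sub_I_mul_half_le_of_Ppoly_eq_zero {τ : ℝ} (hτ : 0 < τ) (hτ4 : τ ≤ 1 / 4) {q : ℂ}
    (hq : ‖q - I * τ / 2‖ < τ / 10) (h : Ppoly τ q = 0) : ‖q - I * τ / 2‖ ≤ τ ^ 2 / 3 := by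
  have hhalf := norm_I_mul_div_two hτ.le
  have hq_le : ‖q‖ ≤ 3 / 5 * τ := by
    linarith [(abs_le.1 (abs_norm_sub_half_le hτ.le hq.le)).2]
  have hplus : 9 / 10 * τ ≤ ‖q + I * τ / 2‖ := by
    have := norm_sub_le (q + I * τ / 2) (q - I * τ / 2)
    rw [show q + I * τ / 2 - (q - I * τ / 2) = 2 * (I * τ / 2) by ring, norm_mul, hhalf,
      Complex.norm_two] at this
    linarith
  have hnorm := congrArg norm (mul_sub_mul_add_eq_of_Ppoly_eq_zero hτ.ne' h)
  simp only [norm_mul, norm_neg, norm_I, norm_pow, norm_real, norm_of_nonneg pi_pos.le,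
    norm_of_nonneg hτ.le, Complex.norm_ofNat, one_mul] at hnorm
  have hQ := norm_quadratic_le (q := q) (by linarith)
  have key : 18 / 5 * π * τ * ‖q - I * τ / 2‖ ≤ 18 / 5 * π * τ * (τ ^ 2 / 3) :=
    calc 18 / 5 * π * τ * ‖q - I * τ / 2‖
        ≤ 4 * π * (‖q - I * τ / 2‖ * ‖q + I * τ / 2‖) := by
          nlinarith [mul_le_mul_of_nonneg_left hplus (norm_nonneg (q - I * τ / 2)), pi_pos]
      _ = τ ^ 2 * ‖q‖ * ‖4 * π * q ^ 2 + (4 * π * I - 1) * q - π‖ := hnorm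
      _ ≤ τ ^ 2 * (3 / 5 * τ) * (2 * π) := by gcongr
      _ = 18 / 5 * π * τ * (τ ^ 2 / 3) := by ring
  exact le_of_mul_le_mul_left key (by positivity)

lemma div_two_mul_le_one_add_two_mul {τ a : ℝ} (hτ : 0 < τ) (hτ1 : τ ≤ 1)
    (ha : τ / 2 - τ ^ 2 / 3 ≤ a) : τ / (2 * a) ≤ 1 + 2 * τ := by
  have ha0 : 0 < a := by nlinarith
  rw [div_le_iff₀ (by positivity)]
  nlinarith [mul_le_mul_of_nonneg_left ha (by positivity : (0:ℝ) ≤ 2 * (1 + 2 * τ))]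

lemma A2coef_eq (q₂ : ℝ → ℂ) {n : ℕ} {τ : ℝ} (hn : n ≠ 0) (hτ : τ ≠ 0) (hq : q₂ τ ≠ 0)
    (hq' : 1 - I * q₂ τ ≠ 0) :
    A2coef q₂ n τ = (I * τ / (2 * q₂ τ)) ^ (n + 1) +
      I * τ * (1 / 2 + 2 * π * I / τ ^ 2) / (π * n) * (τ / (2 * (1 - I * q₂ τ))) ^ n := by
  have hτ' : (τ : ℂ) ≠ 0 := ofReal_ne_zero.2 hτ
  have hπ : (π : ℂ) ≠ 0 := ofReal_ne_zero.2 pi_ne_zero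
  have hn' : (n : ℂ) ≠ 0 := Nat.cast_ne_zero.2 hn
  have hc : 2 * I / τ ≠ 0 := by simp [hτ', I_ne_zero]
  have h1 : -1 / (2 * I / τ * q₂ τ) = I * τ / (2 * q₂ τ) := by
    field_simp; linear_combination -I_sq
  have h2 : I / (2 * I / τ * (1 - I * q₂ τ)) = τ / (2 * (1 - I * q₂ τ)) := by
    field_simp
  have h3 : I * τ = -2 / (2 * I / τ) := by
    field_simp; linear_combination I_sq
  rw [A2coef, ← h1, ← h2, h3]
  generalize 2 * I / (τ : ℂ) = c at hc ⊢
  simp only [div_pow, mul_pow]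
  field_simp
  ring

lemma norm_log_term_le {τ : ℝ} (hτ : 0 < τ) (hτ4 : τ ≤ 1 / 4) {v : ℂ} (hv : 4 / 5 ≤ ‖v‖) {n : ℕ}
    (hn : 2 ≤ n) :
    ‖I * τ * (1 / 2 + 2 * π * I / τ ^ 2) / (π * n) * (τ / (2 * v)) ^ n‖ ≤ τ := by
  have hw : ‖(1 / 2 + 2 * π * I / τ ^ 2 : ℂ)‖ ≤ 1 / 2 + 2 * π / τ ^ 2 := by
    refine (norm_add_le _ _).trans_eq ?_
    simp [abs_of_pos pi_pos]
  have hpow : (τ / (2 * ‖v‖)) ^ n ≤ (5 * τ / 8) ^ 2 := calc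
    (τ / (2 * ‖v‖)) ^ n ≤ (5 * τ / 8) ^ n := by
      refine pow_le_pow_left₀ (by positivity) ?_ n
      rw [div_le_iff₀ (by positivity)]; nlinarith
    _ ≤ (5 * τ / 8) ^ 2 := pow_le_pow_of_le_one (by positivity) (by linarith) hn
  have hn' : (2 : ℝ) ≤ n := by exact_mod_cast hn
  calc ‖I * τ * (1 / 2 + 2 * π * I / τ ^ 2) / (π * n) * (τ / (2 * v)) ^ n‖
      = τ * ‖(1 / 2 + 2 * π * I / τ ^ 2 : ℂ)‖ / (π * n) * (τ / (2 * ‖v‖)) ^ n := by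
        simp [abs_of_pos pi_pos, abs_of_pos hτ]
    _ ≤ τ * (1 / 2 + 2 * π / τ ^ 2) / (π * 2) * (5 * τ / 8) ^ 2 := by gcongr
    _ ≤ τ := by
        rw [div_mul_eq_mul_div, div_le_iff₀ (by positivity)]
        field_simp
        nlinarith [pi_gt_three]

lemma norm_A2coef_le (q₂ : ℝ → ℂ) {n : ℕ} (hn : 2 ≤ n) {τ : ℝ} (hτ : 0 < τ) (hτ4 : τ ≤ 1 / 4)
    (hq : q₂ τ ≠ 0) (hq1 : ‖q₂ τ‖ ≤ 1 / 5) :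
    ‖A2coef q₂ n τ‖ ≤ (τ / (2 * ‖q₂ τ‖)) ^ (n + 1) + τ := by
  have hv : 4 / 5 ≤ ‖1 - I * q₂ τ‖ := by
    have := norm_sub_norm_le 1 (I * q₂ τ)
    simp only [norm_one, norm_mul, norm_I, one_mul] at this
    linarith
  rw [A2coef_eq q₂ (by omega) hτ.ne' hq (norm_pos_iff.1 (by linarith))]
  refine (norm_add_le _ _).trans (add_le_add (le_of_eq ?_) (norm_log_term_le hτ hτ4 hv hn))
  simp [abs_of_pos hτ]

lemma one_add_two_mul_pow_succ_add_le {τ : ℝ} (hτ : 0 ≤ τ) {n : ℕ} (hn : 1 ≤ n) :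
    (1 + 2 * τ) ^ (n + 1) + τ ≤ ((1 + 2 * τ) ^ 3) ^ n := calc
  (1 + 2 * τ) ^ (n + 1) + τ ≤ (1 + 2 * τ) ^ (n + 1) * (1 + 2 * τ) := by
    nlinarith [one_le_pow₀ (n := n + 1) (by linarith : (1 : ℝ) ≤ 1 + 2 * τ)]
  _ = (1 + 2 * τ) ^ (n + 2) := by ring
  _ ≤ (1 + 2 * τ) ^ (3 * n) := pow_le_pow_right₀ (by linarith) (by omega)
  _ = ((1 + 2 * τ) ^ 3) ^ n := pow_mul _ _ _

theorem statement15 (q₂ : ℝ → ℂ)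
    (hq₂ : ∀ τ : ℝ, 0 < τ → τ ≤ 1 / 4 →
      ‖q₂ τ - Complex.I * (τ : ℂ) / 2‖ < τ / 10 ∧ Ppoly τ (q₂ τ) = 0)
    (ε : ℝ) (hε : 0 < ε) :
    ∃ τ₀ : ℝ, 0 < τ₀ ∧ τ₀ ≤ 1 / 4 ∧
      ∀ τ : ℝ, 0 < τ → τ < τ₀ → ∀ n : ℕ, 2 ≤ n →
        ‖A2coef q₂ n τ‖ ≤ (1 + ε) ^ n := by
  refine ⟨min (1 / 4) (ε / 26), by positivity, min_le_left _ _, fun τ hτ hτ₀ n hn => ?_⟩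
  have hτ4 : τ ≤ 1 / 4 := (hτ₀.trans_le (min_le_left _ _)).le
  have hτε : 26 * τ ≤ ε := by linarith [hτ₀.trans_le (min_le_right _ _)]
  obtain ⟨hnear, hroot⟩ := hq₂ τ hτ hτ4
  have hclose := norm_sub_I_mul_half_le_of_Ppoly_eq_zero hτ hτ4 hnear hroot
  obtain ⟨hlow, hup⟩ := abs_le.1 (abs_norm_sub_half_le hτ.le hclose)
  have hq : q₂ τ ≠ 0 := norm_pos_iff.1 (by nlinarith)
  calc ‖A2coef q₂ n τ‖ ≤ (τ / (2 * ‖q₂ τ‖)) ^ (n + 1) + τ :=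
        norm_A2coef_le q₂ hn hτ hτ4 hq (by nlinarith)
    _ ≤ (1 + 2 * τ) ^ (n + 1) + τ := by
        gcongr
        exact div_two_mul_le_one_add_two_mul hτ (by linarith) (by linarith)
    _ ≤ ((1 + 2 * τ) ^ 3) ^ n := one_add_two_mul_pow_succ_add_le hτ.le (by omega)
    _ ≤ (1 + ε) ^ n := by
        gcongr
        nlinarith [mul_le_mul_of_nonneg_left hτ4 hτ.le, mul_le_mul_of_nonneg_left hτ4 (sq_nonneg τ)]
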